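/- Let k be an algebraically closed field of characteristic zero and r ≥ 3 an integer. Let S ⊂ ℙ^r(k) be a set of r+2 points in linearly general position, and let F ⊂ ℙ^r(k) be a finite set with F ∩ S = ∅. Then there exists a rational normal curve D ⊂ ℙ^r(k) with S ⊂ D and D ∩ F = ∅. -/

import Mathlib

open Projectivization

/-- The standard rational normal curve in `ℙ^r(k)`: the set of points represented by
vectors `(a^r, a^(r-1)b, …, b^r)` for `(a,b) ∈ k² \ {0}` (equivalently, for `a, b` such
that this vector is nonzero). -/
def stdRNC (k : Type*) [Field k] (r : ℕ) :
    Set (Projectivization k (Fin (r + 1) → k)) :=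
  {P | ∃ (a b : k)
      (h : (fun j : Fin (r + 1) => a ^ (r - (j : ℕ)) * b ^ (j : ℕ)) ≠ 0),
      P = Projectivization.mk k _ h}

/-- A rational normal curve in `ℙ^r(k)` is the image of the standard rational normal
curve under the projectivization of an invertible linear map of `k^(r+1)`. -/
def IsRNC (k : Type*) [Field k] (r : ℕ)
    (D : Set (Projectivization k (Fin (r + 1) → k))) : Prop :=
  ∃ g : (Fin (r + 1) → k) ≃ₗ[k] (Fin (r + 1) → k),
    D = Projectivization.map (g : (Fin (r + 1) → k) →ₗ[k] (Fin (r + 1) → k))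
      g.injective '' stdRNC k r

/-- A set of points of `ℙ^r(k)` is in linearly general position if any at most `r+1`
of them have linearly independent representative vectors in `k^(r+1)`. -/
def InLinGenPos (k : Type*) [Field k] (r : ℕ)
    (S : Set (Projectivization k (Fin (r + 1) → k))) : Prop :=
  ∀ T : Finset (Projectivization k (Fin (r + 1) → k)), ↑T ⊆ S → T.card ≤ r + 1 →
    LinearIndependent k (fun P : T => Projectivization.rep P.1)

/-!
After a projective change of coordinates the `r + 2` points become the standard frame: the
coordinate points `[eᵢ]` and `[1 : ⋯ : 1]`. For distinct nodes `ν₀, …, ν_r` the curve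
`[a : b] ↦ [∏_{m ≠ i} (a - ν_m b)]ᵢ` is a rational normal curve through the frame: it passes
through `[eᵢ]` at `[νᵢ : 1]` and through `[1 : ⋯ : 1]` at `[1 : 0]`. Any other point `q` of
it satisfies `1 / qᵢ = α + β νᵢ` with `β ≠ 0`, so the nodes `ν₁ = 1`, `ν₂ = 2` and the point
`q` determine `ν₀`. Choosing `ν₀` outside the finitely many values determined by the points
of `F` gives a curve avoiding `F`.
-/
open Finset

theorem Module.Basis.repr_ne_zero_of_linearIndependent_update {ι K V : Type*} [DecidableEq ι]
    [Field K] [AddCommGroup V] [Module K V] (b : Module.Basis ι K V) {w : V} {i : ι}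
    (h : LinearIndependent K (Function.update b i w)) : b.repr w i ≠ 0 := by
  intro hwi
  have hspan : w ∈ Submodule.span K (b '' {i}ᶜ) :=
    b.mem_span_image.2 fun j hj => by rintro rfl; exact Finsupp.mem_support_iff.1 hj hwi
  have himage : Function.update b i w '' {i}ᶜ = b '' {i}ᶜ :=
    Set.image_congr fun j hj => Function.update_of_ne hj _ _
  simpa [himage, hspan] using h.notMem_span_image (s := {i}ᶜ) (x := i) (by simp)

theorem Fin.injective_update_succ_zero {n : ℕ} (i : Fin (n + 1)) :
    Function.Injective (Function.update Fin.succ i 0 : Fin (n + 1) → Fin (n + 2)) := by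
  intro a b h
  by_cases ha : a = i <;> by_cases hb : b = i <;>
    simp_all [Function.update_of_ne, Fin.succ_ne_zero, (Fin.succ_ne_zero _).symm]

section Projectivization

variable {K ι : Type*} [Field K]

theorem Projectivization.mk_eq_mk_single [DecidableEq ι] {v : ι → K} (hv : v ≠ 0) {j : ι}
    (h : v = Pi.single j (v j)) : mk K v hv = mk K (Pi.single j 1) (by simp) :=
  (mk_eq_mk_iff' K _ _ hv _).2 ⟨v j, by rw [← Pi.single_smul', smul_eq_mul, mul_one, ← h]⟩

theorem Projectivization.mk_eq_mk_one [Nonempty ι] {v : ι → K} (hv : v ≠ 0) {x : K}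
    (h : v = fun _ => x) : mk K v hv = mk K 1 one_ne_zero :=
  (mk_eq_mk_iff' K _ _ hv _).2 ⟨x, by funext; simp [h]⟩

end Projectivization

section Homogenize

open Polynomial

variable {k : Type*} [Field k]

theorem Polynomial.eval_homogenize_eq_sum (p : k[X]) (n : ℕ) (a b : k) :
    MvPolynomial.eval ![a, b] (p.homogenize n) =
      ∑ j : Fin (n + 1), p.coeff (n - j) * (a ^ (n - j) * b ^ (j : ℕ)) := by
  rw [homogenize, MvPolynomial.eval_sum, Finset.Nat.sum_antidiagonal_eq_sum_range_succ
    (fun i j => MvPolynomial.eval ![a, b] (.monomial (fun₀ | 0 => i | 1 => j) (p.coeff i))),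
    ← Finset.sum_range_reflect, ← Fin.sum_univ_eq_sum_range]
  refine sum_congr rfl fun j _ => ?_
  have hj : n - (n - j) = j := by omega
  simp [MvPolynomial.eval_monomial, Finsupp.prod_fintype, hj]

theorem Polynomial.eval_homogenize_prod_X_sub_C {ι : Type*} (s : Finset ι) (ν : ι → k)
    (a b : k) :
    MvPolynomial.eval ![a, b] ((∏ m ∈ s, (X - C (ν m))).homogenize #s) =
      ∏ m ∈ s, (a - ν m * b) := by
  have h := homogenize_finsetProd (s := s) (p := fun m => X - C (ν m)) (n := fun _ => 1)
    (fun m _ => natDegree_X_sub_C_le _)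
  simp only [sum_const, smul_eq_mul, mul_one] at h
  rw [h, map_prod]
  exact prod_congr rfl fun m _ => by simp [homogenize_X, homogenize_C]

end Homogenize

section

variable {k : Type*} [Field k] {r : ℕ}

theorem InLinGenPos.linearIndependent_rep {S : Set (Projectivization k (Fin (r + 1) → k))}
    (hS : InLinGenPos k r S) {ι : Type*} [Fintype ι]
    {P : ι → Projectivization k (Fin (r + 1) → k)} (hP : Function.Injective P)
    (hPS : ∀ i, P i ∈ S) (hcard : Fintype.card ι ≤ r + 1) :
    LinearIndependent k fun i => (P i).rep := by
  classical
  have hT := hS (univ.image P) (by simpa [Set.range_subset_iff] using hPS)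
    (card_image_le.trans (by simpa using hcard))
  exact hT.comp (fun i => ⟨P i, mem_image_of_mem P (mem_univ i)⟩)
    fun i j h => hP (congrArg Subtype.val h)

theorem IsRNC.image_map {D : Set (Projectivization k (Fin (r + 1) → k))} (hD : IsRNC k r D)
    (g : (Fin (r + 1) → k) ≃ₗ[k] (Fin (r + 1) → k)) :
    IsRNC k r (map (g : (Fin (r + 1) → k) →ₗ[k] (Fin (r + 1) → k)) g.injective '' D) := by
  obtain ⟨h, rfl⟩ := hD
  refine ⟨h.trans g, ?_⟩
  rw [Set.image_image]
  refine Set.image_congr fun x _ => ?_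
  induction x using Projectivization.ind
  simp [map_mk]

end

namespace RationalNormalCurve

variable {k : Type*} [Field k] {n : ℕ}

variable (k n) in
def stdFrame : Set (Projectivization k (Fin (n + 1) → k)) :=
  insert (mk k 1 one_ne_zero) (Set.range fun i => mk k (Pi.single i 1) (by simp))

theorem exists_basis_mk_eq_and_sum_eq {S : Set (Projectivization k (Fin (n + 1) → k))}
    (hS : InLinGenPos k n S) {P : Fin (n + 2) → Projectivization k (Fin (n + 1) → k)}
    (hP : Function.Injective P) (hPS : ∀ i, P i ∈ S) :
    ∃ B : Module.Basis (Fin (n + 1)) k (Fin (n + 1) → k),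
      (∀ i, mk k (B i) (B.ne_zero i) = P i.succ) ∧ ∑ i, B i = (P 0).rep := by
  classical
  have hli := hS.linearIndependent_rep (hP.comp (Fin.succ_injective _)) (fun i => hPS _)
    (by simp)
  set bV := basisOfLinearIndependentOfCardEqFinrank hli (by simp)
  have hbV : ⇑bV = fun m => (P m.succ).rep := coe_basisOfLinearIndependentOfCardEqFinrank hli _
  -- `P 0` together with any `n` of the other points is still independent
  have hw (i : Fin (n + 1)) : bV.repr (P 0).rep i ≠ 0 := by
    refine bV.repr_ne_zero_of_linearIndependent_update ?_
    have hupdate : Function.update (⇑bV) i (P 0).rep =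
        fun j => (P (Function.update Fin.succ i 0 j)).rep := by
      funext j
      rcases eq_or_ne j i with rfl | hji
      · simp
      · simp [hbV, hji]
    rw [hupdate]
    exact hS.linearIndependent_rep (hP.comp (Fin.injective_update_succ_zero i))
      (fun i => hPS _) (by simp)
  have hB (i : Fin (n + 1)) :
      bV.unitsSMul (fun m => Units.mk0 _ (hw m)) i = bV.repr (P 0).rep i • bV i :=
    bV.unitsSMul_apply i
  refine ⟨bV.unitsSMul fun m => Units.mk0 _ (hw m), fun i => ?_, by simp [hB, bV.sum_repr]⟩
  conv_rhs => rw [← mk_rep (P i.succ)]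
  exact (mk_eq_mk_iff' k _ _ _ _).2 ⟨bV.repr (P 0).rep i, by simp [hB, hbV]⟩

theorem exists_linearEquiv_image_stdFrame {S : Finset (Projectivization k (Fin (n + 1) → k))}
    (hcard : S.card = n + 2) (hS : InLinGenPos k n ↑S) :
    ∃ g : (Fin (n + 1) → k) ≃ₗ[k] (Fin (n + 1) → k),
      map (g : (Fin (n + 1) → k) →ₗ[k] (Fin (n + 1) → k)) g.injective '' stdFrame k n =
        ↑S := by
  set e := (S.equivFinOfCardEq hcard).symm
  set P : Fin (n + 2) → Projectivization k (Fin (n + 1) → k) := Subtype.val ∘ e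
  have hrange : Set.range P = S := by rw [e.surjective.range_comp, Subtype.range_coe]
  obtain ⟨B, hB, hsum⟩ := exists_basis_mk_eq_and_sum_eq (P := P) hS
    (Subtype.val_injective.comp e.injective) fun i => (e i).2
  refine ⟨B.equivFun.symm, ?_⟩
  rw [stdFrame, Set.image_insert_eq, ← Set.range_comp, ← hrange, Fin.range_fin_succ P]
  congr 1
  · rw [map_mk]
    conv_rhs => rw [← mk_rep (P 0)]
    congr 1
    simp [Module.Basis.equivFun_symm_apply, hsum]
  · congr 1
    funext i
    simp [map_mk, hB, Fin.tail]

def lagrangeVec (ν : Fin (n + 1) → k) (a b : k) : Fin (n + 1) → k :=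
  fun i => ∏ m ∈ univ.erase i, (a - ν m * b)

def lagrangeCurve (ν : Fin (n + 1) → k) : Set (Projectivization k (Fin (n + 1) → k)) :=
  {P | ∃ (a b : k) (h : lagrangeVec ν a b ≠ 0), P = mk k _ h}

open Polynomial in
noncomputable def lagrangeMatrix (ν : Fin (n + 1) → k) :
    Matrix (Fin (n + 1)) (Fin (n + 1)) k :=
  Matrix.of fun i j => (∏ m ∈ univ.erase i, (X - C (ν m))).coeff (n - j)

theorem lagrangeMatrix_mulVec (ν : Fin (n + 1) → k) (a b : k) :
    (lagrangeMatrix ν).mulVec (fun j : Fin (n + 1) => a ^ (n - (j : ℕ)) * b ^ (j : ℕ)) =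
      lagrangeVec ν a b := by
  funext i
  have hcard : #(univ.erase i) = n := by simp
  rw [lagrangeVec, ← Polynomial.eval_homogenize_prod_X_sub_C, hcard,
    Polynomial.eval_homogenize_eq_sum]
  rfl

theorem lagrangeVec_eq_single {ν : Fin (n + 1) → k} {a b : k} {j : Fin (n + 1)}
    (h : a = ν j * b) : lagrangeVec ν a b = Pi.single j (lagrangeVec ν a b j) := by
  funext i
  rcases eq_or_ne i j with rfl | hij
  · simp
  · rw [Pi.single_eq_of_ne hij]
    exact prod_eq_zero (mem_erase.2 ⟨hij.symm, mem_univ j⟩) (sub_eq_zero.2 h)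

theorem lagrangeVec_apply_ne_zero {ν : Fin (n + 1) → k} (hν : Function.Injective ν)
    (j : Fin (n + 1)) : lagrangeVec ν (ν j) 1 j ≠ 0 :=
  prod_ne_zero_iff.2 fun m hm => by
    simpa [sub_eq_zero] using hν.ne (mem_erase.1 hm).1.symm

theorem lagrangeVec_zero_right (ν : Fin (n + 1) → k) (a : k) :
    lagrangeVec ν a 0 = fun _ => a ^ n := by
  funext i
  simp [lagrangeVec]

theorem surjective_toLin'_lagrangeMatrix {ν : Fin (n + 1) → k} (hν : Function.Injective ν) :
    Function.Surjective (Matrix.toLin' (lagrangeMatrix ν)) := by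
  rw [← LinearMap.range_eq_top, eq_top_iff, ← (Pi.basisFun k (Fin (n + 1))).span_eq,
    Submodule.span_le]
  rintro _ ⟨j, rfl⟩
  refine ⟨(lagrangeVec ν (ν j) 1 j)⁻¹ •
    fun i : Fin (n + 1) => ν j ^ (n - (i : ℕ)) * 1 ^ (i : ℕ), ?_⟩
  rw [map_smul, Matrix.toLin'_apply, lagrangeMatrix_mulVec,
    lagrangeVec_eq_single (mul_one _).symm]
  simp [← Pi.single_smul', inv_mul_cancel₀ (lagrangeVec_apply_ne_zero hν j)]

theorem isRNC_lagrangeCurve {ν : Fin (n + 1) → k} (hν : Function.Injective ν) :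
    IsRNC k n (lagrangeCurve ν) := by
  have hsurj := surjective_toLin'_lagrangeMatrix hν
  let g := LinearEquiv.ofBijective _ ⟨LinearMap.injective_iff_surjective.2 hsurj, hsurj⟩
  have hg (a b : k) : g (fun j : Fin (n + 1) => a ^ (n - (j : ℕ)) * b ^ (j : ℕ)) =
      lagrangeVec ν a b :=
    lagrangeMatrix_mulVec ν a b
  refine ⟨g, Set.ext fun P => ⟨?_, ?_⟩⟩
  · rintro ⟨a, b, h, rfl⟩
    have hmono : (fun j : Fin (n + 1) => a ^ (n - (j : ℕ)) * b ^ (j : ℕ)) ≠ 0 := by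
      rintro hzero
      simp [← hg, hzero] at h
    exact ⟨mk k _ hmono, ⟨a, b, hmono, rfl⟩, by simp [map_mk, hg]⟩
  · rintro ⟨_, ⟨a, b, hmono, rfl⟩, rfl⟩
    have h : lagrangeVec ν a b ≠ 0 := by
      rw [← hg]; exact (map_ne_zero_iff g g.injective).2 hmono
    exact ⟨a, b, h, by simp [map_mk, hg]⟩

theorem stdFrame_subset_lagrangeCurve {ν : Fin (n + 1) → k} (hν : Function.Injective ν) :
    stdFrame k n ⊆ lagrangeCurve ν := by
  rintro _ (rfl | ⟨j, rfl⟩)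
  · have hne : lagrangeVec ν 1 0 ≠ 0 := by simp [lagrangeVec_zero_right, funext_iff]
    exact ⟨1, 0, hne, (mk_eq_mk_one hne (lagrangeVec_zero_right ν 1)).symm⟩
  · have h := lagrangeVec_eq_single (ν := ν) (j := j) (mul_one _).symm
    have hne : lagrangeVec ν (ν j) 1 ≠ 0 := by
      rw [h]; exact Pi.single_ne_zero_iff.2 (lagrangeVec_apply_ne_zero hν j)
    exact ⟨ν j, 1, hne, (mk_eq_mk_single hne h).symm⟩

theorem exists_inv_rep_eq_of_mem_lagrangeCurve {ν : Fin (n + 1) → k}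
    {q : Projectivization k (Fin (n + 1) → k)} (hq : q ∈ lagrangeCurve ν)
    (hqF : q ∉ stdFrame k n) :
    ∃ α β : k, β ≠ 0 ∧ ∀ i, (q.rep i)⁻¹ = α + β * ν i := by
  obtain ⟨a, b, h, rfl⟩ := hq
  by_cases hroot : ∃ j, a = ν j * b
  · obtain ⟨j, hj⟩ := hroot
    exact absurd (Or.inr ⟨j, (mk_eq_mk_single h (lagrangeVec_eq_single hj)).symm⟩) hqF
  push Not at hroot
  rcases eq_or_ne b 0 with rfl | hb
  · exact absurd (Or.inl (mk_eq_mk_one h (lagrangeVec_zero_right ν a))) hqF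
  obtain ⟨c, hc⟩ := exists_smul_eq_mk_rep k _ h
  set Q := ∏ m, (a - ν m * b)
  have hQ : Q ≠ 0 := prod_ne_zero_iff.2 fun m _ => sub_ne_zero.2 (hroot m)
  refine ⟨a / (c * Q), -b / (c * Q), by simp [hb, hQ], fun i => ?_⟩
  have hi : a - ν i * b ≠ 0 := sub_ne_zero.2 (hroot i)
  have hvec : lagrangeVec ν a b i = Q / (a - ν i * b) :=
    eq_div_of_mul_eq hi <| by
      rw [mul_comm]; exact mul_prod_erase univ (fun m => a - ν m * b) (mem_univ i)
  rw [← hc, Pi.smul_apply, Units.smul_def, smul_eq_mul, hvec]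
  field_simp
  ring

/-- If `1 / vᵢ = α + β νᵢ` with `β ≠ 0`, `ν₁ = 1` and `ν₂ = 2`, this is `ν₀`. -/
def frameParam (v : Fin (n + 2 + 1) → k) : k :=
  ((v 0)⁻¹ - 2 * (v 1)⁻¹ + (v 2)⁻¹) / ((v 2)⁻¹ - (v 1)⁻¹)

theorem frameParam_eq {v : Fin (n + 2 + 1) → k} {α β t : k} (hβ : β ≠ 0)
    (h0 : (v 0)⁻¹ = α + β * t) (h1 : (v 1)⁻¹ = α + β * 1)
    (h2 : (v 2)⁻¹ = α + β * 2) :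
    frameParam v = t := by
  rw [frameParam, h0, h1, h2, div_eq_iff (by ring_nf; exact hβ)]
  ring

theorem exists_isRNC_stdFrame_subset_avoiding [CharZero k]
    {F : Set (Projectivization k (Fin (n + 2 + 1) → k))} (hF : F.Finite)
    (hFS : F ∩ stdFrame k (n + 2) = ∅) :
    ∃ C, IsRNC k (n + 2) C ∧ stdFrame k (n + 2) ⊆ C ∧ C ∩ F = ∅ := by
  let nodes : Fin (n + 2) → k := fun m => (m : ℕ) + 1
  obtain ⟨t, ht⟩ :=
    ((hF.image fun q => frameParam q.rep).union (Set.finite_range nodes)).exists_notMem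
  rw [Set.mem_union, not_or] at ht
  have hν : Function.Injective (Fin.cons t nodes : Fin (n + 2 + 1) → k) :=
    Fin.cons_injective_iff.2 ⟨ht.2, fun m m' h => by simpa [nodes, Fin.val_inj] using h⟩
  refine ⟨lagrangeCurve _, isRNC_lagrangeCurve hν, stdFrame_subset_lagrangeCurve hν, ?_⟩
  refine Set.eq_empty_of_forall_notMem fun q ⟨hqC, hqF⟩ => ht.1 ⟨q, hqF, ?_⟩
  have hq : q ∉ stdFrame k (n + 2) := fun hq =>
    Set.eq_empty_iff_forall_notMem.1 hFS q ⟨hqF, hq⟩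
  obtain ⟨α, β, hβ, h⟩ := exists_inv_rep_eq_of_mem_lagrangeCurve hqC hq
  have hν1 : (Fin.cons t nodes : Fin (n + 2 + 1) → k) 1 = 1 := by simp [nodes]
  have hν2 : (Fin.cons t nodes : Fin (n + 2 + 1) → k) 2 = 2 := by
    rw [← Fin.succ_one_eq_two, Fin.cons_succ]; norm_num [nodes]
  exact frameParam_eq hβ (h 0) (hν1 ▸ h 1) (hν2 ▸ h 2)

end RationalNormalCurve

open RationalNormalCurve in
theorem statement_16_general (k : Type*) [Field k] [CharZero k]
    (r : ℕ) (hr : 3 ≤ r)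
    (S : Finset (Projectivization k (Fin (r + 1) → k))) (hcard : S.card = r + 2)
    (hS : InLinGenPos k r ↑S)
    (F : Set (Projectivization k (Fin (r + 1) → k))) (hF : F.Finite)
    (hFS : F ∩ ↑S = ∅) :
    ∃ D : Set (Projectivization k (Fin (r + 1) → k)),
      IsRNC k r D ∧ ↑S ⊆ D ∧ D ∩ F = ∅ := by
  obtain ⟨n, rfl⟩ : ∃ n, r = n + 2 := ⟨r - 2, by omega⟩
  obtain ⟨g, hg⟩ := exists_linearEquiv_image_stdFrame hcard hS
  set φ := map (g : (Fin (n + 2 + 1) → k) →ₗ[k] (Fin (n + 2 + 1) → k)) g.injective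
  have hφ : Function.Injective φ := map_injective _ _
  have hframeF : φ ⁻¹' F ∩ stdFrame k (n + 2) = ∅ :=
    Set.eq_empty_of_forall_notMem fun p ⟨hpF, hp⟩ =>
      Set.eq_empty_iff_forall_notMem.1 hFS (φ p) ⟨hpF, hg ▸ Set.mem_image_of_mem φ hp⟩
  obtain ⟨C, hC, hframe, hCF⟩ :=
    exists_isRNC_stdFrame_subset_avoiding (hF.preimage hφ.injOn) hframeF
  refine ⟨φ '' C, hC.image_map g, hg ▸ Set.image_mono hframe, ?_⟩
  rw [← Set.image_inter_preimage, hCF, Set.image_empty]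

/-- For a set `S` of `r+2` points of `ℙ^r(k)` in linearly general position and a finite
set `F` disjoint from `S`, there is a rational normal curve containing `S` and avoiding
`F` (over an algebraically closed field of characteristic zero, `r ≥ 3`). -/
theorem statement_16 (k : Type*) [Field k] [IsAlgClosed k] [CharZero k]
    (r : ℕ) (hr : 3 ≤ r)
    (S : Finset (Projectivization k (Fin (r + 1) → k))) (hcard : S.card = r + 2)
    (hS : InLinGenPos k r ↑S)
    (F : Set (Projectivization k (Fin (r + 1) → k))) (hF : F.Finite)
    (hFS : F ∩ ↑S = ∅) :
    ∃ D : Set (Projectivization k (Fin (r + 1) → k)),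
      IsRNC k r D ∧ ↑S ⊆ D ∧ D ∩ F = ∅ :=
  statement_16_general k r hr S hcard hS F hF hFS
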